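/- Let (fₙ) be a sequence of monotone convex functions on [a,b], each differentiable on (a,b), converging uniformly to f. Then the derivatives fₙ' converge to f' in L¹([a,b]) (where f' exists almost everywhere since f is convex). -/

import Mathlib

/-!
Each `f n` is monotone, so `∫ |f n'|` over an interval is at most the oscillation of `f n` there
(Lebesgue's bound for monotone functions). The limit `g` is monotone as well, hence has one-sided
limits at `a` and `b`, so its oscillation is small on short intervals at the endpoints; by uniform
convergence the same holds for all late `f n`, and both end pieces contribute uniformly little.
On a compact subinterval of `(a, b)`, convexity traps `f n'` between slopes of `f n`, which
converge to slopes of `g`: this bounds `f n'` uniformly and gives `f n' → g'` wherever `g` is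
differentiable, i.e. almost everywhere, so bounded convergence handles the middle piece.
-/

open MeasureTheory Set Filter
open scoped Topology ENNReal

theorem Filter.Tendsto.slope {ι : Type*} {l : Filter ι} {f : ι → ℝ → ℝ} {g : ℝ → ℝ} {x y : ℝ}
    (hx : Tendsto (fun i => f i x) l (𝓝 (g x))) (hy : Tendsto (fun i => f i y) l (𝓝 (g y))) :
    Tendsto (fun i => slope (f i) x y) l (𝓝 (slope g x y)) := by
  simp only [slope_def_field]
  exact (hy.sub hx).div_const _

theorem tendsto_deriv_of_convexOn {ι : Type*} {l : Filter ι} {f : ι → ℝ → ℝ} {g : ℝ → ℝ}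
    {s : Set ℝ} {x : ℝ} (hconv : ∀ i, ConvexOn ℝ s (f i))
    (hdiff : ∀ i, DifferentiableAt ℝ (f i) x)
    (hfg : ∀ y ∈ s, Tendsto (fun i => f i y) l (𝓝 (g y)))
    (hs : s ∈ 𝓝 x) (hg : DifferentiableAt ℝ g x) :
    Tendsto (fun i => deriv (f i) x) l (𝓝 (deriv g x)) := by
  have hslope := hg.hasDerivAt.tendsto_slope
  have hxs : x ∈ s := mem_of_mem_nhds hs
  refine tendsto_order.2 ⟨fun m hm => ?_, fun M hM => ?_⟩
  · obtain ⟨y, ⟨hmy, hys⟩, hyx⟩ := (((hslope.mono_left (nhdsLT_le_nhdsNE x)).eventually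
      (lt_mem_nhds hm)).and (nhdsWithin_le_nhds hs)).and self_mem_nhdsWithin |>.exists
    filter_upwards [((hfg x hxs).slope (hfg y hys)).eventually (lt_mem_nhds hmy)] with i hi
    rw [slope_comm] at hi
    exact hi.trans_le ((hconv i).slope_le_deriv hys hxs hyx (hdiff i))
  · obtain ⟨y, ⟨hMy, hys⟩, hxy⟩ := (((hslope.mono_left (nhdsGT_le_nhdsNE x)).eventually
      (gt_mem_nhds hM)).and (nhdsWithin_le_nhds hs)).and self_mem_nhdsWithin |>.exists
    filter_upwards [((hfg x hxs).slope (hfg y hys)).eventually (gt_mem_nhds hMy)] with i hi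
    exact ((hconv i).deriv_le_slope hxs hys hxy (hdiff i)).trans_lt hi

theorem exists_eventually_abs_deriv_le_of_convexOn {f : ℕ → ℝ → ℝ} {g : ℝ → ℝ} {a b p q : ℝ}
    (hconv : ∀ n, ConvexOn ℝ (Icc a b) (f n))
    (hdiff : ∀ n, ∀ x ∈ Ioo a b, DifferentiableAt ℝ (f n) x)
    (hfg : ∀ y ∈ Icc a b, Tendsto (fun n => f n y) atTop (𝓝 (g y)))
    (hap : a < p) (hqb : q < b) :
    ∃ M, ∀ᶠ n in atTop, ∀ x ∈ Icc p q, |deriv (f n) x| ≤ M := by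
  rcases lt_or_ge q p with hqp | hpq
  · exact ⟨0, Eventually.of_forall fun n x hx => absurd (hx.1.trans hx.2) (not_le.2 hqp)⟩
  have hpI : p ∈ Ioo a b := ⟨hap, hpq.trans_lt hqb⟩
  have hqI : q ∈ Ioo a b := ⟨hap.trans_le hpq, hqb⟩
  have haI : a ∈ Icc a b := left_mem_Icc.2 (hap.trans hpI.2).le
  have hbI : b ∈ Icc a b := right_mem_Icc.2 (hap.trans hpI.2).le
  refine ⟨max |slope g a p - 1| |slope g q b + 1|, ?_⟩
  filter_upwards [((hfg a haI).slope (hfg p (Ioo_subset_Icc_self hpI))).eventually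
      (lt_mem_nhds (sub_one_lt _)),
    ((hfg q (Ioo_subset_Icc_self hqI)).slope (hfg b hbI)).eventually
      (gt_mem_nhds (lt_add_one _))] with n hlo hhi x hx
  have hxI : x ∈ Ioo a b := ⟨hap.trans_le hx.1, hx.2.trans_lt hqb⟩
  have hmder : MonotoneOn (deriv (f n)) (Ioo a b) :=
    ((hconv n).subset Ioo_subset_Icc_self (convex_Ioo a b)).monotoneOn_deriv (hdiff n)
  refine abs_le_max_abs_abs (hlo.le.trans ?_) (le_trans ?_ hhi.le)
  · exact ((hconv n).slope_le_deriv haI (Ioo_subset_Icc_self hpI) hap (hdiff n p hpI)).trans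
      (hmder hpI hxI hx.1)
  · exact (hmder hxI hqI hx.2).trans
      ((hconv n).deriv_le_slope (Ioo_subset_Icc_self hqI) hbI hqb (hdiff n q hqI))

theorem monotoneOn_or_antitoneOn_of_tendsto {ι : Type*} {l : Filter ι} [l.NeBot] {f : ι → ℝ → ℝ}
    {g : ℝ → ℝ} {s : Set ℝ} (hf : ∀ i, MonotoneOn (f i) s ∨ AntitoneOn (f i) s)
    (hfg : ∀ x ∈ s, Tendsto (fun i => f i x) l (𝓝 (g x))) :
    MonotoneOn g s ∨ AntitoneOn g s := by
  by_cases hfreq : ∃ᶠ i in l, MonotoneOn (f i) s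
  · refine Or.inl fun x hx y hy hxy => sub_nonpos.1 <|
      le_of_tendsto_of_frequently ((hfg x hx).sub (hfg y hy)) ?_
    exact hfreq.mono fun i hi => sub_nonpos.2 (hi hx hy hxy)
  · have hanti : ∃ᶠ i in l, AntitoneOn (f i) s :=
      ((not_frequently.1 hfreq).mono fun i hi => (hf i).resolve_left hi).frequently
    refine Or.inr fun x hx y hy hxy => sub_nonpos.1 <|
      le_of_tendsto_of_frequently ((hfg y hy).sub (hfg x hx)) ?_
    exact hanti.mono fun i hi => sub_nonpos.2 (hi hx hy hxy)

theorem ae_differentiableAt_of_monotoneOn_or_antitoneOn {g : ℝ → ℝ} {s : Set ℝ} (hs : IsOpen s)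
    (hg : MonotoneOn g s ∨ AntitoneOn g s) :
    ∀ᵐ x ∂volume.restrict s, DifferentiableAt ℝ g x := by
  wlog hmon : MonotoneOn g s generalizing g
  · have hanti := hg.resolve_left hmon
    simpa [differentiableAt_neg_iff] using this (g := -g) (Or.inl hanti.neg) hanti.neg
  filter_upwards [hmon.ae_differentiableWithinAt hs.measurableSet,
    ae_restrict_mem hs.measurableSet] with x hx hxs
  exact hx.differentiableAt (hs.mem_nhds hxs)

theorem exists_tendsto_nhdsLT_of_monotoneOn_or_antitoneOn {g : ℝ → ℝ} {a b : ℝ} (hab : a < b)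
    (hg : MonotoneOn g (Icc a b) ∨ AntitoneOn g (Icc a b)) :
    ∃ L, Tendsto g (𝓝[<] b) (𝓝 L) := by
  have hne : (Ioo a b).Nonempty := nonempty_Ioo.2 hab
  rcases hg with hmon | hanti
  · exact ⟨_, (hmon.mono Ioo_subset_Icc_self).tendsto_nhdsWithin_Ioo_left hne
      (hmon.map_bddAbove Ioo_subset_Icc_self ⟨b, fun x hx => hx.2.le, right_mem_Icc.2 hab.le⟩)⟩
  · exact ⟨_, (hanti.mono Ioo_subset_Icc_self).tendsto_nhdsWithin_Ioo_left hne
      (hanti.map_bddAbove Ioo_subset_Icc_self ⟨b, fun x hx => hx.2.le, right_mem_Icc.2 hab.le⟩)⟩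

theorem exists_tendsto_nhdsGT_of_monotoneOn_or_antitoneOn {g : ℝ → ℝ} {a b : ℝ} (hab : a < b)
    (hg : MonotoneOn g (Icc a b) ∨ AntitoneOn g (Icc a b)) :
    ∃ L, Tendsto g (𝓝[>] a) (𝓝 L) := by
  have hne : (Ioo a b).Nonempty := nonempty_Ioo.2 hab
  rcases hg with hmon | hanti
  · exact ⟨_, (hmon.mono Ioo_subset_Icc_self).tendsto_nhdsWithin_Ioo_right hne
      (hmon.map_bddBelow Ioo_subset_Icc_self ⟨a, fun x hx => hx.1.le, left_mem_Icc.2 hab.le⟩)⟩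
  · exact ⟨_, (hanti.mono Ioo_subset_Icc_self).tendsto_nhdsWithin_Ioo_right hne
      (hanti.map_bddBelow Ioo_subset_Icc_self ⟨a, fun x hx => hx.1.le, left_mem_Icc.2 hab.le⟩)⟩

theorem exists_Ico_abs_sub_le_of_tendsto_nhdsLT {g : ℝ → ℝ} {a b L ε : ℝ} (hab : a < b)
    (hg : Tendsto g (𝓝[<] b) (𝓝 L)) (hε : 0 < ε) :
    ∃ q ∈ Ico a b, ∀ u ∈ Ioo q b, ∀ v ∈ Ioo q b, |g v - g u| ≤ ε := by
  obtain ⟨t, ht, hsmall⟩ := (Metric.cauchy_iff.1 hg.cauchy_map).2 ε hε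
  obtain ⟨q, hq, hqt⟩ := (mem_nhdsLT_iff_exists_mem_Ico_Ioo_subset hab).1 ht
  exact ⟨q, hq, fun u hu v hv => (hsmall _ (hqt hv) _ (hqt hu)).le⟩

theorem exists_Ioc_abs_sub_le_of_tendsto_nhdsGT {g : ℝ → ℝ} {a b L ε : ℝ} (hab : a < b)
    (hg : Tendsto g (𝓝[>] a) (𝓝 L)) (hε : 0 < ε) :
    ∃ p ∈ Ioc a b, ∀ u ∈ Ioo a p, ∀ v ∈ Ioo a p, |g v - g u| ≤ ε := by
  obtain ⟨t, ht, hsmall⟩ := (Metric.cauchy_iff.1 hg.cauchy_map).2 ε hε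
  obtain ⟨p, hp, hpt⟩ := (mem_nhdsGT_iff_exists_mem_Ioc_Ioo_subset hab).1 ht
  exact ⟨p, hp, fun u hu v hv => (hsmall _ (hpt hv) _ (hpt hu)).le⟩

theorem MonotoneOn.setLIntegral_Icc_enorm_deriv_le {F : ℝ → ℝ} {c d u v : ℝ}
    (hmon : MonotoneOn F (Ioo c d)) (hcu : c < u) (hvd : v < d) :
    ∫⁻ x in Icc u v, ‖deriv F x‖ₑ ≤ ENNReal.ofReal (F v - F u) := by
  rcases lt_or_ge v u with hvu | huv
  · simp [Icc_eq_empty_of_lt hvu]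
  have hsub : Icc u v ⊆ Ioo c d := Icc_subset_Ioo hcu hvd
  have hmon' : MonotoneOn F (uIcc u v) := hmon.mono (uIcc_of_le huv ▸ hsub)
  have hint : IntegrableOn (deriv F) (Icc u v) :=
    (intervalIntegrable_iff_integrableOn_Icc_of_le huv).1 hmon'.intervalIntegrable_deriv
  have hnonneg : ∀ x ∈ Ioc u v, 0 ≤ deriv F x := fun x hx => by
    rw [← derivWithin_of_isOpen isOpen_Ioo (hsub (Ioc_subset_Icc_self hx))]
    exact hmon.derivWithin_nonneg
  calc ∫⁻ x in Icc u v, ‖deriv F x‖ₑ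
      = ENNReal.ofReal (∫ x in Icc u v, ‖deriv F x‖) :=
        (ofReal_integral_norm_eq_lintegral_enorm hint).symm
    _ = ENNReal.ofReal (∫ x in u..v, deriv F x) := by
        rw [integral_Icc_eq_integral_Ioc, intervalIntegral.integral_of_le huv]
        congr 1
        refine setIntegral_congr_fun measurableSet_Ioc fun x hx => ?_
        rw [Real.norm_eq_abs, abs_of_nonneg (hnonneg x hx)]
    _ ≤ ENNReal.ofReal (F v - F u) := by
        refine ENNReal.ofReal_le_ofReal ?_
        have hmem := hmon'.intervalIntegral_deriv_mem_uIcc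
        rw [uIcc_of_le (sub_nonneg.2 (hmon' left_mem_uIcc right_mem_uIcc huv))] at hmem
        exact hmem.2

theorem setLIntegral_Ioo_enorm_deriv_le {F : ℝ → ℝ} {c d K : ℝ}
    (hF : MonotoneOn F (Ioo c d) ∨ AntitoneOn F (Ioo c d))
    (hK : ∀ u ∈ Ioo c d, ∀ v ∈ Ioo c d, |F v - F u| ≤ K) :
    ∫⁻ x in Ioo c d, ‖deriv F x‖ₑ ≤ ENNReal.ofReal K := by
  wlog hmon : MonotoneOn F (Ioo c d) generalizing F
  · have hanti := hF.resolve_left hmon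
    have hneg := this (F := -F) (Or.inl hanti.neg) (fun u hu v hv => by
      rw [Pi.neg_apply, Pi.neg_apply, neg_sub_neg, abs_sub_comm]
      exact hK u hu v hv) hanti.neg
    simpa [deriv.neg] using hneg
  rcases le_or_gt d c with hdc | hcd
  · simp [Ioo_eq_empty_of_le hdc]
  -- exhaust `Ioo c d` by the intervals `Icc u v` as `u ↓ c` and `v ↑ d`
  have hcover : AECover (volume.restrict (Ioo c d)) (𝓝[>] c ×ˢ 𝓝[<] d)
      fun p : ℝ × ℝ => Icc p.1 p.2 :=
    aecover_Ioo_of_Icc (tendsto_fst.mono_right nhdsWithin_le_nhds)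
      (tendsto_snd.mono_right nhdsWithin_le_nhds)
  refine le_of_tendsto
    (hcover.lintegral_tendsto_of_countably_generated (measurable_deriv F).enorm.aemeasurable) ?_
  filter_upwards [prod_mem_prod (Ioo_mem_nhdsGT hcd) (Ioo_mem_nhdsLT hcd)] with p hp
  exact (lintegral_mono' (Measure.restrict_mono subset_rfl Measure.restrict_le_self) le_rfl).trans
    ((hmon.setLIntegral_Icc_enorm_deriv_le hp.1.1 hp.2.2).trans
      (ENNReal.ofReal_le_ofReal ((le_abs_self _).trans (hK _ hp.1 _ hp.2))))

theorem setLIntegral_Ioo_enorm_deriv_sub_le {F G : ℝ → ℝ} {c d η : ℝ}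
    (hF : MonotoneOn F (Ioo c d) ∨ AntitoneOn F (Ioo c d))
    (hG : MonotoneOn G (Ioo c d) ∨ AntitoneOn G (Ioo c d))
    (hFG : ∀ x ∈ Ioo c d, |F x - G x| ≤ η)
    (hGosc : ∀ u ∈ Ioo c d, ∀ v ∈ Ioo c d, |G v - G u| ≤ η) :
    ∫⁻ x in Ioo c d, ‖deriv F x - deriv G x‖ₑ ≤ ENNReal.ofReal (4 * η) := by
  rcases (Ioo c d).eq_empty_or_nonempty with hempty | ⟨x, hx⟩
  · simp [hempty]
  have hη : 0 ≤ η := by simpa using hGosc x hx x hx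
  have hFosc : ∀ u ∈ Ioo c d, ∀ v ∈ Ioo c d, |F v - F u| ≤ 3 * η := fun u hu v hv => by
    have hvu := abs_sub_le (F v) (G v) (F u)
    have hGF := abs_sub_le (G v) (G u) (F u)
    rw [abs_sub_comm (G u)] at hGF
    linarith [hFG u hu, hFG v hv, hGosc u hu v hv]
  calc ∫⁻ x in Ioo c d, ‖deriv F x - deriv G x‖ₑ
      ≤ ∫⁻ x in Ioo c d, (‖deriv F x‖ₑ + ‖deriv G x‖ₑ) := lintegral_mono fun x => enorm_sub_le
    _ = (∫⁻ x in Ioo c d, ‖deriv F x‖ₑ) + ∫⁻ x in Ioo c d, ‖deriv G x‖ₑ :=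
        lintegral_enorm_add_left (measurable_deriv F).aestronglyMeasurable _
    _ ≤ ENNReal.ofReal (3 * η) + ENNReal.ofReal η :=
        add_le_add (setLIntegral_Ioo_enorm_deriv_le hF hFosc)
          (setLIntegral_Ioo_enorm_deriv_le hG hGosc)
    _ = ENNReal.ofReal (4 * η) := by
        rw [← ENNReal.ofReal_add (by positivity) hη]
        ring_nf

theorem tendsto_setLIntegral_enorm_sub_of_abs_le {α : Type*} [MeasurableSpace α] {μ : Measure α}
    {s : Set α} (hs : MeasurableSet s) (hμs : μ s ≠ ∞) {φ : ℕ → α → ℝ} {ψ : α → ℝ}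
    (hφ : ∀ n, Measurable (φ n)) (hψ : Measurable ψ) {M : ℝ}
    (hM : ∀ᶠ n in atTop, ∀ x ∈ s, |φ n x| ≤ M)
    (hlim : ∀ᵐ x ∂μ.restrict s, Tendsto (fun n => φ n x) atTop (𝓝 (ψ x))) :
    Tendsto (fun n => ∫⁻ x in s, ‖φ n x - ψ x‖ₑ ∂μ) atTop (𝓝 0) := by
  have hψM : ∀ᵐ x ∂μ.restrict s, |ψ x| ≤ M := by
    filter_upwards [hlim, ae_restrict_mem hs] with x hx hxs
    exact le_of_tendsto hx.abs (hM.mono fun n hn => hn x hxs)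
  have hdct := tendsto_lintegral_filter_of_dominated_convergence (fun _ => ENNReal.ofReal (2 * M))
    (Eventually.of_forall fun n => ((hφ n).sub hψ).enorm)
    (hM.mono fun n hn => by
      filter_upwards [hψM, ae_restrict_mem hs] with x hx hxs
      rw [Real.enorm_eq_ofReal_abs]
      refine ENNReal.ofReal_le_ofReal ((abs_sub _ _).trans ?_)
      linarith [hn x hxs])
    (by rw [setLIntegral_const]; exact ENNReal.mul_ne_top ENNReal.ofReal_ne_top hμs)
    (hlim.mono fun x hx => by simpa using (hx.sub_const (ψ x)).enorm)
  simpa using hdct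

theorem tendsto_setLIntegral_Ioo_of_tails {a b : ℝ} {F : ℕ → ℝ → ℝ≥0∞}
    (hmid : ∀ p q, a < p → q < b → Tendsto (fun n => ∫⁻ x in Icc p q, F n x) atTop (𝓝 0))
    (htail : ∀ ε : ℝ, 0 < ε → ∃ p q, a < p ∧ q < b ∧ ∀ᶠ n in atTop,
      ∫⁻ x in Ioo a p, F n x ≤ ENNReal.ofReal ε ∧ ∫⁻ x in Ioo q b, F n x ≤ ENNReal.ofReal ε) :
    Tendsto (fun n => ∫⁻ x in Ioo a b, F n x) atTop (𝓝 0) := by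
  refine ENNReal.tendsto_nhds_zero.2 fun ε hε => ?_
  obtain ⟨r, -, hr0, hrε⟩ := ENNReal.lt_iff_exists_real_btwn.1 hε
  have hr : 0 < r / 3 := by have := ENNReal.ofReal_pos.1 hr0; positivity
  obtain ⟨p, q, hap, hqb, htails⟩ := htail (r / 3) hr
  filter_upwards [htails, ENNReal.tendsto_nhds_zero.1 (hmid p q hap hqb) _
    (ENNReal.ofReal_pos.2 hr)] with n ⟨hleft, hright⟩ hmiddle
  have hcover : Ioo a b ⊆ Ioo a p ∪ Icc p q ∪ Ioo q b := fun x hx => by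
    rcases lt_or_ge x p with hxp | hpx
    · exact Or.inl (Or.inl ⟨hx.1, hxp⟩)
    rcases le_or_gt x q with hxq | hqx
    · exact Or.inl (Or.inr ⟨hpx, hxq⟩)
    · exact Or.inr ⟨hqx, hx.2⟩
  calc ∫⁻ x in Ioo a b, F n x
      ≤ ∫⁻ x in Ioo a p ∪ Icc p q ∪ Ioo q b, F n x := lintegral_mono_set hcover
    _ ≤ (∫⁻ x in Ioo a p, F n x) + (∫⁻ x in Icc p q, F n x) + ∫⁻ x in Ioo q b, F n x :=
        (lintegral_union_le _ _ _).trans (add_le_add (lintegral_union_le _ _ _) le_rfl)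
    _ ≤ ENNReal.ofReal (r / 3) + ENNReal.ofReal (r / 3) + ENNReal.ofReal (r / 3) :=
        add_le_add (add_le_add hleft hmiddle) hright
    _ = ENNReal.ofReal r := by
        rw [← ENNReal.ofReal_add hr.le hr.le, ← ENNReal.ofReal_add (by positivity) hr.le]
        ring_nf
    _ ≤ ε := hrε.le

theorem tendsto_setLIntegral_enorm_deriv_sub_of_convexOn {a b : ℝ} (hab : a < b)
    {f : ℕ → ℝ → ℝ} {g : ℝ → ℝ} (hconv : ∀ n, ConvexOn ℝ (Icc a b) (f n))
    (hmono : ∀ n, MonotoneOn (f n) (Icc a b) ∨ AntitoneOn (f n) (Icc a b))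
    (hdiff : ∀ n, ∀ x ∈ Ioo a b, DifferentiableAt ℝ (f n) x)
    (hunif : TendstoUniformlyOn f g atTop (Icc a b)) :
    Tendsto (fun n => ∫⁻ x in Ioo a b, ‖deriv (f n) x - deriv g x‖ₑ) atTop (𝓝 0) := by
  have hfg : ∀ y ∈ Icc a b, Tendsto (fun n => f n y) atTop (𝓝 (g y)) :=
    fun y hy => hunif.tendsto_at hy
  have hg := monotoneOn_or_antitoneOn_of_tendsto hmono hfg
  have hlim : ∀ᵐ x ∂volume.restrict (Ioo a b),
      Tendsto (fun n => deriv (f n) x) atTop (𝓝 (deriv g x)) := by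
    filter_upwards [ae_differentiableAt_of_monotoneOn_or_antitoneOn isOpen_Ioo
        (hg.imp (·.mono Ioo_subset_Icc_self) (·.mono Ioo_subset_Icc_self)),
      ae_restrict_mem measurableSet_Ioo] with x hgx hx
    exact tendsto_deriv_of_convexOn hconv (fun n => hdiff n x hx) hfg (Icc_mem_nhds hx.1 hx.2) hgx
  refine tendsto_setLIntegral_Ioo_of_tails (fun p q hap hqb => ?_) (fun ε hε => ?_)
  · obtain ⟨M, hM⟩ := exists_eventually_abs_deriv_le_of_convexOn hconv hdiff hfg hap hqb
    exact tendsto_setLIntegral_enorm_sub_of_abs_le measurableSet_Icc measure_Icc_lt_top.ne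
      (fun n => measurable_deriv _) (measurable_deriv _) hM
      (ae_restrict_of_ae_restrict_of_subset (Icc_subset_Ioo hap hqb) hlim)
  · have hη : 0 < ε / 4 := by positivity
    obtain ⟨Lb, hLb⟩ := exists_tendsto_nhdsLT_of_monotoneOn_or_antitoneOn hab hg
    obtain ⟨La, hLa⟩ := exists_tendsto_nhdsGT_of_monotoneOn_or_antitoneOn hab hg
    obtain ⟨q, hq, hqosc⟩ := exists_Ico_abs_sub_le_of_tendsto_nhdsLT hab hLb hη
    obtain ⟨p, hp, hposc⟩ := exists_Ioc_abs_sub_le_of_tendsto_nhdsGT hab hLa hη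
    refine ⟨p, q, hp.1, hq.2, ?_⟩
    filter_upwards [Metric.tendstoUniformlyOn_iff.1 hunif _ hη] with n hn
    have htail : ∀ c d, Ioo c d ⊆ Icc a b →
        (∀ u ∈ Ioo c d, ∀ v ∈ Ioo c d, |g v - g u| ≤ ε / 4) →
        ∫⁻ x in Ioo c d, ‖deriv (f n) x - deriv g x‖ₑ ≤ ENNReal.ofReal ε := fun c d hcd hosc => by
      have := setLIntegral_Ioo_enorm_deriv_sub_le ((hmono n).imp (·.mono hcd) (·.mono hcd))
        (hg.imp (·.mono hcd) (·.mono hcd))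
        (fun x hx => by rw [abs_sub_comm, ← Real.dist_eq]; exact (hn x (hcd hx)).le) hosc
      rwa [mul_div_cancel₀ _ four_ne_zero] at this
    exact ⟨htail a p (Ioo_subset_Icc_self.trans (Icc_subset_Icc_right hp.2)) hposc,
      htail q b (Ioo_subset_Icc_self.trans (Icc_subset_Icc_left hq.1)) hqosc⟩

theorem stmt_16 (a b : ℝ) (hab : a < b) (f : ℕ → ℝ → ℝ) (g : ℝ → ℝ)
    (hconv : ∀ n, ConvexOn ℝ (Set.Icc a b) (f n))
    (hmono : ∀ n, MonotoneOn (f n) (Set.Icc a b) ∨ AntitoneOn (f n) (Set.Icc a b))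
    (hdiff : ∀ n, ∀ x ∈ Set.Ioo a b, DifferentiableAt ℝ (f n) x)
    (hunif : TendstoUniformlyOn f g Filter.atTop (Set.Icc a b)) :
    Filter.Tendsto (fun n => ∫ x in Set.Ioo a b, |deriv (f n) x - deriv g x|)
      Filter.atTop (nhds 0) := by
  have hlint := tendsto_setLIntegral_enorm_deriv_sub_of_convexOn hab hconv hmono hdiff hunif
  have hint : ∀ n, ∫ x in Ioo a b, |deriv (f n) x - deriv g x|
      = (∫⁻ x in Ioo a b, ‖deriv (f n) x - deriv g x‖ₑ).toReal := fun n =>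
    integral_norm_eq_lintegral_enorm (f := fun x => deriv (f n) x - deriv g x)
      ((measurable_deriv _).sub (measurable_deriv _)).aestronglyMeasurable
  simpa [hint, Function.comp_def] using (ENNReal.tendsto_toReal ENNReal.zero_ne_top).comp hlint
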